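/- arXiv:math/0612385 — 3 statements merged into one kernel-verified Lean document; each statement's English description precedes it below -/
import Mathlib

section
/- Let S ⊂ 𝔞 be a finite set whose differences span 𝔞, h(u) = ∑_{μ∈S} e^{⟨μ,u⟩}, and δ ∈ 𝔞 with δ in the interior of the convex hull of S. Then the function φ^δ(u) = log h(u) − ⟨δ,u⟩ tends to +∞ as |u| → ∞, is strictly convex, and hence attains its minimum at a unique point s ∈ 𝔞, which is the unique solution of ∇h(s) = δ·h(s). -/
/-!
Each `u ↦ ⟪μ, u⟫ - ⟪δ, u⟫` with `μ ∈ S` is a lower bound for `φ^δ`, and since a closed ball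
of radius `r > 0` around `δ` lies in the convex hull of `S`, for every `u` one of them is at least
`r ‖u‖`; hence `φ^δ` is coercive. Strict convexity is that of log-sum-exp, which is strict along
every direction `v` in which the exponents `⟪μ, v⟫` are not all equal, and the spanning
hypothesis rules that out for `v ≠ 0`. A coercive continuous function has a minimiser, strict
convexity makes it unique, and for a differentiable convex function the minimisers are exactly
the critical points, where `∇φ^δ = ∇h / h - δ` vanishes.
-/

open scoped RealInnerProductSpace
open Finset Filter Real

section SumExp

variable {ι : Type*} {s : Finset ι}

theorem Real.sum_exp_sub_log_sum_exp (hs : s.Nonempty) (f : ι → ℝ) :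
    ∑ i ∈ s, exp (f i - log (∑ j ∈ s, exp (f j))) = 1 := by
  have hpos : 0 < ∑ j ∈ s, exp (f j) := sum_pos (fun i _ ↦ exp_pos _) hs
  simp only [exp_sub, exp_log hpos, ← sum_div, div_self hpos.ne']

theorem Real.sum_exp_add_lt_one {c d : ι → ℝ} (hc : ∑ i ∈ s, exp (c i) = 1)
    (hd : ∑ i ∈ s, exp (d i) = 1) (hcd : ∃ i ∈ s, c i ≠ d i) {a b : ℝ} (ha : 0 < a) (hb : 0 < b)
    (hab : a + b = 1) : ∑ i ∈ s, exp (a * c i + b * d i) < 1 :=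
  calc ∑ i ∈ s, exp (a * c i + b * d i) < ∑ i ∈ s, (a * exp (c i) + b * exp (d i)) := by
        refine sum_lt_sum (fun i _ ↦ ?_) ?_
        · simpa using convexOn_exp.2 (Set.mem_univ (c i)) (Set.mem_univ (d i)) ha.le hb.le hab
        · obtain ⟨i, hi, hne⟩ := hcd
          exact ⟨i, hi, by simpa using
            strictConvexOn_exp.2 (Set.mem_univ (c i)) (Set.mem_univ (d i)) hne ha hb hab⟩
    _ = 1 := by rw [sum_add_distrib, ← mul_sum, ← mul_sum, hc, hd, mul_one, mul_one, hab]

theorem Real.log_sum_exp_add_lt {f g : ι → ℝ} (hfg : ∃ i ∈ s, ∃ j ∈ s, f i - g i ≠ f j - g j)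
    {a b : ℝ} (ha : 0 < a) (hb : 0 < b) (hab : a + b = 1) :
    log (∑ i ∈ s, exp (a * f i + b * g i)) <
      a * log (∑ i ∈ s, exp (f i)) + b * log (∑ i ∈ s, exp (g i)) := by
  obtain ⟨i, hi, j, hj, hij⟩ := hfg
  have hs : s.Nonempty := ⟨i, hi⟩
  set A := log (∑ i ∈ s, exp (f i))
  set B := log (∑ i ∈ s, exp (g i))
  have hcd : ∃ k ∈ s, f k - A ≠ g k - B := by
    by_contra! h
    have := h i hi
    have := h j hj
    exact hij (by linarith)
  have hlt := sum_exp_add_lt_one (sum_exp_sub_log_sum_exp hs f) (sum_exp_sub_log_sum_exp hs g)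
    hcd ha hb hab
  have hsplit : ∑ i ∈ s, exp (a * f i + b * g i) =
      (∑ i ∈ s, exp (a * (f i - A) + b * (g i - B))) * exp (a * A + b * B) := by
    rw [sum_mul]
    exact sum_congr rfl fun k _ ↦ by rw [← exp_add]; ring_nf
  have hpos : 0 < ∑ i ∈ s, exp (a * (f i - A) + b * (g i - B)) :=
    sum_pos (fun _ _ ↦ exp_pos _) hs
  rw [hsplit, log_mul hpos.ne' (exp_pos _).ne', log_exp]
  linarith [log_neg hpos hlt]

end SumExp

theorem ConvexOn.le_of_hasFDerivAt_eq_zero {F : Type*} [NormedAddCommGroup F] [NormedSpace ℝ F]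
    {f : F → ℝ} (hf : ConvexOn ℝ Set.univ f) {x : F}
    (hx : HasFDerivAt f (0 : F →L[ℝ] ℝ) x) (y : F) : f x ≤ f y := by
  have hline : ConvexOn ℝ Set.univ (f ∘ (AffineMap.lineMap x y : ℝ →ᵃ[ℝ] F)) :=
    hf.comp_affineMap _
  have hderiv : HasDerivAt (f ∘ (AffineMap.lineMap x y : ℝ →ᵃ[ℝ] F)) 0 0 := by
    rw [← AffineMap.lineMap_apply_zero x y (k := ℝ)] at hx
    simpa using hx.comp_hasDerivAt (0 : ℝ) AffineMap.hasDerivAt_lineMap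
  have := hline.le_slope_of_hasDerivAt (Set.mem_univ 0) (Set.mem_univ 1) one_pos hderiv
  simpa [slope_def_field] using this

section InnerProductSpace

variable {F : Type*} [NormedAddCommGroup F] [InnerProductSpace ℝ F]

theorem exists_inner_ne_zero_of_span_eq_top {T : Set F} (hT : Submodule.span ℝ T = ⊤) {v : F}
    (hv : v ≠ 0) : ∃ t ∈ T, ⟪t, v⟫ ≠ 0 := by
  by_contra! h
  have hle : Submodule.span ℝ T ≤ (ℝ ∙ v)ᗮ :=
    Submodule.span_le.2 fun t ht ↦ Submodule.mem_orthogonal_singleton_iff_inner_left.2 (h t ht)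
  rw [hT, top_le_iff, Submodule.orthogonal_eq_top_iff, Submodule.span_singleton_eq_bot] at hle
  exact hv hle

theorem exists_mem_inner_sub_ge_of_closedBall_subset_convexHull {S : Set F} {δ : F} {r : ℝ}
    (hr : 0 ≤ r) (hball : Metric.closedBall δ r ⊆ convexHull ℝ S) (u : F) :
    ∃ μ ∈ S, r * ‖u‖ ≤ ⟪μ - δ, u⟫ := by
  obtain ⟨x, hx, hxu⟩ : ∃ x ∈ Metric.closedBall δ r, ⟪x - δ, u⟫ = r * ‖u‖ := by
    rcases eq_or_ne u 0 with rfl | hu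
    · exact ⟨δ, Metric.mem_closedBall_self hr, by simp⟩
    · refine ⟨δ + (r / ‖u‖) • u, by simp [dist_eq_norm, norm_smul, abs_of_nonneg hr, hu], ?_⟩
      simp only [add_sub_cancel_left, real_inner_smul_left, real_inner_self_eq_norm_sq]
      field_simp
  obtain ⟨μ, hμ, hle⟩ := ((innerₛₗ ℝ u).convexOn convex_univ).exists_ge_of_mem_convexHull
    (Set.subset_univ S) (hball hx)
  refine ⟨μ, hμ, ?_⟩
  simp only [innerₛₗ_apply_apply] at hle
  rw [← hxu, inner_sub_left, inner_sub_left, real_inner_comm u x, real_inner_comm u μ]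
  linarith

variable [CompleteSpace F]

theorem HasGradientAt.log_sub_inner {f : F → ℝ} {g x : F} (hf : HasGradientAt f g x)
    (hx : f x ≠ 0) (δ : F) :
    HasGradientAt (fun v ↦ log (f v) - ⟪δ, v⟫) ((f x)⁻¹ • g - δ) x := by
  rw [hasGradientAt_iff_hasFDerivAt] at hf ⊢
  refine (((hasDerivAt_log hx).comp_hasFDerivAt x hf).sub
    (innerSL ℝ δ).hasFDerivAt).congr_fderiv ?_
  ext v
  simp [InnerProductSpace.toDual_apply_apply]

theorem ConvexOn.forall_le_iff_of_hasGradientAt {f : F → ℝ} (hf : ConvexOn ℝ Set.univ f)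
    {g x : F} (hx : HasGradientAt f g x) : (∀ y, f x ≤ f y) ↔ g = 0 := by
  rw [hasGradientAt_iff_hasFDerivAt] at hx
  constructor
  · intro hmin
    exact (InnerProductSpace.toDual ℝ F).map_eq_zero_iff.1
      (IsLocalMin.hasFDerivAt_eq_zero (Eventually.of_forall hmin) hx)
  · rintro rfl
    exact hf.le_of_hasFDerivAt_eq_zero (by simpa using hx)

end InnerProductSpace

section ExpSum

variable {E : Type*} [NormedAddCommGroup E] [InnerProductSpace ℝ E]

noncomputable def expSum (S : Finset E) (u : E) : ℝ := ∑ μ ∈ S, exp ⟪μ, u⟫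

variable {S : Finset E}

theorem expSum_pos (hS : S.Nonempty) (u : E) : 0 < expSum S u :=
  sum_pos (fun _ _ ↦ exp_pos _) hS

theorem differentiable_expSum (S : Finset E) : Differentiable ℝ (expSum S) := by
  unfold expSum
  exact Differentiable.fun_sum fun μ _ ↦ (innerSL ℝ μ).differentiable.exp

theorem inner_le_log_expSum {μ : E} (hμ : μ ∈ S) (u : E) : ⟪μ, u⟫ ≤ log (expSum S u) :=
  (le_log_iff_exp_le (expSum_pos ⟨μ, hμ⟩ u)).2 <|
    single_le_sum (f := fun ν ↦ exp ⟪ν, u⟫) (fun _ _ ↦ (exp_pos _).le) hμ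

theorem strictConvexOn_log_expSum
    (hspan : Submodule.span ℝ {x : E | ∃ μ ∈ S, ∃ μ' ∈ S, x = μ - μ'} = ⊤) :
    StrictConvexOn ℝ Set.univ fun u ↦ log (expSum S u) := by
  refine ⟨convex_univ, fun x _ y _ hxy a b ha hb hab ↦ ?_⟩
  obtain ⟨_, ⟨μ, hμ, μ', hμ', rfl⟩, hne⟩ :=
    exists_inner_ne_zero_of_span_eq_top hspan (sub_ne_zero.2 hxy)
  have hfg : ∃ μ ∈ S, ∃ μ' ∈ S, ⟪μ, x⟫ - ⟪μ, y⟫ ≠ ⟪μ', x⟫ - ⟪μ', y⟫ := by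
    refine ⟨μ, hμ, μ', hμ', fun h ↦ hne ?_⟩
    simp only [inner_sub_left, inner_sub_right]
    linarith
  simpa [expSum, inner_add_right, real_inner_smul_right] using log_sum_exp_add_lt hfg ha hb hab

theorem tendsto_log_expSum_sub_inner_cocompact [ProperSpace E] {δ : E}
    (hδ : δ ∈ interior (convexHull ℝ (S : Set E))) :
    Tendsto (fun u ↦ log (expSum S u) - ⟪δ, u⟫) (cocompact E) atTop := by
  obtain ⟨r, hr, hball⟩ := Metric.nhds_basis_closedBall.mem_iff.1 (isOpen_interior.mem_nhds hδ)
  have hlower : ∀ u, r * ‖u‖ ≤ log (expSum S u) - ⟪δ, u⟫ := fun u ↦ by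
    obtain ⟨μ, hμ, hle⟩ := exists_mem_inner_sub_ge_of_closedBall_subset_convexHull hr.le
      (hball.trans interior_subset) u
    rw [inner_sub_left] at hle
    linarith [inner_le_log_expSum hμ u]
  exact tendsto_atTop_mono hlower (tendsto_norm_cocompact_atTop.const_mul_atTop hr)

end ExpSum

/-- If `S - S` spans `𝔞` and `δ` lies in the interior of the convex hull of `S`, then
`φ^δ(u) = log h(u) - ⟨δ,u⟩` tends to `+∞` at infinity, is strictly convex, and attains its
minimum at a unique point `s`, which is the unique solution of `∇h(s) = δ·h(s)`. -/
theorem stmt_2 {E : Type*} [NormedAddCommGroup E] [InnerProductSpace ℝ E]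
    [FiniteDimensional ℝ E]
    (S : Finset E)
    (hspan : Submodule.span ℝ {x : E | ∃ μ ∈ S, ∃ μ' ∈ S, x = μ - μ'} = ⊤)
    (δ : E) (hδ : δ ∈ interior (convexHull ℝ (S : Set E)))
    (h : E → ℝ) (hh : ∀ u, h u = ∑ μ ∈ S, Real.exp ⟪μ, u⟫)
    (φ : E → ℝ) (hφ : ∀ u, φ u = Real.log (h u) - ⟪δ, u⟫) :
    Tendsto φ (cocompact E) atTop ∧
    StrictConvexOn ℝ Set.univ φ ∧
    ∃ s : E, (∀ u, φ s ≤ φ u) ∧ gradient h s = h s • δ ∧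
      ∀ s' : E, ((∀ u, φ s' ≤ φ u) ∨ gradient h s' = h s' • δ) → s' = s := by
  obtain rfl : h = expSum S := funext hh
  have hφ' : φ = fun u ↦ log (expSum S u) - ⟪δ, u⟫ := funext hφ
  have hS : S.Nonempty := coe_nonempty.1 (convexHull_nonempty_iff.1 ⟨δ, interior_subset hδ⟩)
  have hcoercive : Tendsto φ (cocompact E) atTop :=
    hφ' ▸ tendsto_log_expSum_sub_inner_cocompact hδ
  have hconv : StrictConvexOn ℝ Set.univ φ :=
    hφ' ▸ (strictConvexOn_log_expSum hspan).sub_concaveOn ((innerₛₗ ℝ δ).concaveOn convex_univ)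
  have hgrad : ∀ s, HasGradientAt φ ((expSum S s)⁻¹ • gradient (expSum S) s - δ) s := fun s ↦
    hφ' ▸ (differentiable_expSum S s).hasGradientAt.log_sub_inner (expSum_pos hS s).ne' δ
  have hmin_iff : ∀ s, (∀ u, φ s ≤ φ u) ↔ gradient (expSum S) s = expSum S s • δ := fun s ↦ by
    rw [hconv.convexOn.forall_le_iff_of_hasGradientAt (hgrad s), sub_eq_zero,
      inv_smul_eq_iff₀ (expSum_pos hS s).ne']
  obtain ⟨s, hs⟩ := (continuous_iff_continuousAt.2 fun s ↦
    (hgrad s).differentiableAt.continuousAt).exists_forall_le hcoercive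
  refine ⟨hcoercive, hconv, s, hs, (hmin_iff s).1 hs, fun s' hs' ↦ ?_⟩
  have hs'min := hs'.elim id (hmin_iff s').2
  exact hconv.eq_of_isMinOn (fun u _ ↦ hs'min u) (fun u _ ↦ hs u) trivial trivial
end

section
/- In the A_2 setting, write s ∈ closure(𝔞_+) for the solution of ∇h(s) = δ h(s) where h = ∑_{μ∈W_0λ_1∪W_0λ_2} e^μ and δ ∈ closure(𝔞_+) with |δ| < 1. If ⟨λ_1,s⟩ ≥ ⟨λ_2,s⟩, then δ_1 ≥ δ_2, where δ_i = ⟨δ, α_i⟩ for the simple roots α_1, α_2. -/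
open scoped RealInnerProductSpace
open Real

/-!
With `a = ⟪λ₁, s⟫` and `b = ⟪λ₂, s⟫`, the six weights pair up into `±λ₁, ±λ₂, ±(λ₁ - λ₂)`, so
`h = 2 (cosh a + cosh b + cosh (a - b))` and
`∇h(s) = 2 (sinh a • λ₁ + sinh b • λ₂ + sinh (a - b) • (λ₁ - λ₂))`.
Pairing the stationarity equation with `α₁, α₂` gives `h(s) δ₁ = 2 (sinh a + sinh (a - b))` and
`h(s) δ₂ = 2 (sinh b - sinh (a - b))`. For `b ≤ a`, monotonicity of `sinh` gives `sinh b ≤ sinh a`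
and `0 ≤ sinh (a - b)`; divide by `h(s) > 0`.
-/

section Gradient

variable {E : Type*} [NormedAddCommGroup E] [InnerProductSpace ℝ E] [CompleteSpace E]
  {f g : E → ℝ} {f' g' x : E}

theorem HasGradientAt.add (hf : HasGradientAt f f' x) (hg : HasGradientAt g g' x) :
    HasGradientAt (fun u => f u + g u) (f' + g') x := by
  rw [hasGradientAt_iff_hasFDerivAt, map_add]
  exact hf.hasFDerivAt.add hg.hasFDerivAt

theorem HasGradientAt.const_mul (c : ℝ) (hf : HasGradientAt f f' x) :
    HasGradientAt (fun u => c * f u) (c • f') x := by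
  rw [hasGradientAt_iff_hasFDerivAt, map_smul]
  exact hf.hasFDerivAt.const_mul c

theorem hasGradientAt_cosh_inner (v x : E) :
    HasGradientAt (fun u => cosh ⟪v, u⟫) (sinh ⟪v, x⟫ • v) x := by
  rw [hasGradientAt_iff_hasFDerivAt, map_smul]
  exact (innerSL ℝ v).hasFDerivAt.cosh

end Gradient

theorem sum_exp_A2_weights_eq_two_mul_cosh (a b : ℝ) :
    exp a + exp (b - a) + exp (-b) + exp b + exp (a - b) + exp (-a)
      = 2 * (cosh a + cosh b + cosh (a - b)) := by
  rw [cosh_eq, cosh_eq, cosh_eq, neg_sub]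
  ring

theorem sinh_sub_sinh_sub_le_sinh_add_sinh_sub {a b : ℝ} (hba : b ≤ a) :
    sinh b - sinh (a - b) ≤ sinh a + sinh (a - b) := by
  have : 0 ≤ sinh (a - b) := sinh_nonneg_iff.2 (sub_nonneg.2 hba)
  linarith [sinh_le_sinh.2 hba]

theorem stmt_5_general {E : Type*} [NormedAddCommGroup E] [InnerProductSpace ℝ E]
    [FiniteDimensional ℝ E]
    (α1 α2 lam1 lam2 : E)
    (hl11 : ⟪lam1, α1⟫ = 1) (hl12 : ⟪lam1, α2⟫ = 0)
    (hl21 : ⟪lam2, α1⟫ = 0) (hl22 : ⟪lam2, α2⟫ = 1)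
    (h : E → ℝ)
    (hh : ∀ u, h u = exp ⟪lam1, u⟫ + exp ⟪lam2 - lam1, u⟫ + exp ⟪-lam2, u⟫
        + exp ⟪lam2, u⟫ + exp ⟪lam1 - lam2, u⟫ + exp ⟪-lam1, u⟫)
    (δ s : E)
    (heq : gradient h s = h s • δ)
    (hord : ⟪lam2, s⟫ ≤ ⟪lam1, s⟫) :
    ⟪δ, α2⟫ ≤ ⟪δ, α1⟫ := by
  have hcosh : h = fun u => 2 * (cosh ⟪lam1, u⟫ + cosh ⟪lam2, u⟫ + cosh ⟪lam1 - lam2, u⟫) := by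
    ext u
    rw [hh, inner_sub_left, inner_sub_left, inner_neg_left, inner_neg_left,
      sum_exp_A2_weights_eq_two_mul_cosh]
  have hgrad : gradient h s = (2 : ℝ) • (sinh ⟪lam1, s⟫ • lam1 + sinh ⟪lam2, s⟫ • lam2
      + sinh ⟪lam1 - lam2, s⟫ • (lam1 - lam2)) := by
    rw [hcosh]
    exact ((((hasGradientAt_cosh_inner lam1 s).add (hasGradientAt_cosh_inner lam2 s)).add
      (hasGradientAt_cosh_inner (lam1 - lam2) s)).const_mul 2).gradient
  have hpos : 0 < h s := by
    rw [hcosh]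
    positivity
  have hpair1 : h s * ⟪δ, α1⟫ = 2 * (sinh ⟪lam1, s⟫ + sinh (⟪lam1, s⟫ - ⟪lam2, s⟫)) := by
    rw [← real_inner_smul_left, ← heq, hgrad]
    simp only [inner_sub_left, smul_add, inner_add_left, real_inner_smul_left, hl11, hl21, mul_one,
      mul_zero, add_zero, sub_zero]
    ring
  have hpair2 : h s * ⟪δ, α2⟫ = 2 * (sinh ⟪lam2, s⟫ - sinh (⟪lam1, s⟫ - ⟪lam2, s⟫)) := by
    rw [← real_inner_smul_left, ← heq, hgrad]
    simp only [inner_sub_left, smul_add, inner_add_left, real_inner_smul_left, hl12, hl22, mul_zero,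
      mul_one, zero_add, zero_sub, mul_neg]
    ring
  refine le_of_mul_le_mul_left ?_ hpos
  rw [hpair1, hpair2]
  linarith [sinh_sub_sinh_sub_le_sinh_add_sinh_sub hord]

/-- `A_2` setting: `α₁, α₂` are the simple roots (norm² = 2, inner product `-1`),
`λ₁, λ₂` the fundamental weights (`⟨λ_i, α_j⟩ = δ_ij`), and
`h = ∑_{μ ∈ W₀λ₁ ∪ W₀λ₂} e^μ`. If `s ∈ closure(𝔞₊)` solves `∇h(s) = δ·h(s)` for
`δ ∈ closure(𝔞₊)` with `|δ| = δ₁ + δ₂ < 1`, and `⟨λ₁,s⟩ ≥ ⟨λ₂,s⟩`, then `δ₁ ≥ δ₂`,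
where `δ_i = ⟨δ, α_i⟩`. -/
theorem stmt_5 {E : Type*} [NormedAddCommGroup E] [InnerProductSpace ℝ E]
    [FiniteDimensional ℝ E] (hdim : Module.finrank ℝ E = 2)
    (α1 α2 lam1 lam2 : E)
    (hα11 : ⟪α1, α1⟫ = 2) (hα22 : ⟪α2, α2⟫ = 2) (hα12 : ⟪α1, α2⟫ = -1)
    (hl11 : ⟪lam1, α1⟫ = 1) (hl12 : ⟪lam1, α2⟫ = 0)
    (hl21 : ⟪lam2, α1⟫ = 0) (hl22 : ⟪lam2, α2⟫ = 1)
    (h : E → ℝ)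
    (hh : ∀ u, h u = exp ⟪lam1, u⟫ + exp ⟪lam2 - lam1, u⟫ + exp ⟪-lam2, u⟫
        + exp ⟪lam2, u⟫ + exp ⟪lam1 - lam2, u⟫ + exp ⟪-lam1, u⟫)
    (δ s : E)
    (hδ1 : 0 ≤ ⟪δ, α1⟫) (hδ2 : 0 ≤ ⟪δ, α2⟫) (hδ : ⟪δ, α1⟫ + ⟪δ, α2⟫ < 1)
    (hs1 : 0 ≤ ⟪α1, s⟫) (hs2 : 0 ≤ ⟪α2, s⟫)
    (heq : gradient h s = h s • δ)
    (hord : ⟪lam2, s⟫ ≤ ⟪lam1, s⟫) :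
    ⟪δ, α2⟫ ≤ ⟪δ, α1⟫ :=
  stmt_5_general α1 α2 lam1 lam2 hl11 hl12 hl21 hl22 h hh δ s heq hord
end

section
/- In the A_r setting, the subset Λ(i_1,…,i_r) = {s ∈ closure(𝔞_+) : ⟨λ_{i_1},s⟩ ≥ ⋯ ≥ ⟨λ_{i_r},s⟩}, for a permutation (i_1,…,i_r) of (1,…,r), has nonempty intersection with the open Weyl chamber 𝔞_+ if and only if for every 2 ≤ j ≤ r there exists k < j such that i_j = i_k + 1 or i_j = i_k − 1. -/
open scoped RealInnerProductSpace

private lemma chain_lt (U : ℕ → ℝ) : ∀ b a, a < b → (∀ n, a ≤ n → n < b → U n < U (n+1)) → U a < U b := by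
  intro b
  induction b with
  | zero => omega
  | succ b ih =>
    intro a hab h
    rcases Nat.lt_or_ge a b with hb | hb
    · exact lt_trans (ih a hb (fun n h1 h2 => h n h1 (by omega))) (h b (by omega) (by omega))
    · have : a = b := by omega
      subst this
      exact h a le_rfl (by omega)

set_option maxHeartbeats 1000000 in
/-- `A_r` setting: the set `Λ(i₁,…,i_r) = {s ∈ closure(𝔞₊) : ⟨λ_{i₁},s⟩ ≥ ⋯ ≥ ⟨λ_{i_r},s⟩}`,
for a permutation `σ` of `{1,…,r}`, meets the open Weyl chamber `𝔞₊` iff for every `j ≥ 2`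
there is `k < j` with `i_j = i_k ± 1`. Here the `A_r` root data is axiomatized by the Gram
matrix of the simple roots `α_i` and the duality `⟨λ_i, α_j⟩ = δ_ij`. -/
theorem stmt_12 {E : Type*} [NormedAddCommGroup E] [InnerProductSpace ℝ E]
    (r : ℕ) (hr : 0 < r) (hdim : Module.finrank ℝ E = r)
    (α lam : Fin r → E)
    (hind : LinearIndependent ℝ α)
    (hαα : ∀ i j : Fin r, ⟪α i, α j⟫
        = if i = j then 2 else if (i : ℕ) + 1 = (j : ℕ) ∨ (j : ℕ) + 1 = (i : ℕ) then -1 else 0)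
    (hlα : ∀ i j : Fin r, ⟪lam i, α j⟫ = if i = j then 1 else 0)
    (σ : Equiv.Perm (Fin r)) :
    (∃ s : E, (∀ i, 0 < ⟪α i, s⟫) ∧
        ∀ j k : Fin r, j ≤ k → ⟪lam (σ k), s⟫ ≤ ⟪lam (σ j), s⟫)
      ↔ ∀ j : Fin r, 0 < (j : ℕ) →
          ∃ k : Fin r, k < j ∧
            ((σ j : ℕ) = (σ k : ℕ) + 1 ∨ (σ k : ℕ) = (σ j : ℕ) + 1) := by
  classical
  have hne : Nonempty (Fin r) := ⟨⟨0, hr⟩⟩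
  have hspan : Submodule.span ℝ (Set.range α) = ⊤ := by
    apply hind.span_eq_top_of_card_eq_finrank; simp [hdim]
  have hzero : ∀ v : E, (∀ j : Fin r, ⟪v, α j⟫ = 0) → v = 0 := by
    intro v hv
    have hmem : ∀ w ∈ Submodule.span ℝ (Set.range α), ⟪v, w⟫ = 0 := by
      intro w hw
      induction hw using Submodule.span_induction with
      | mem x hx => obtain ⟨j, rfl⟩ := hx; exact hv j
      | zero => exact inner_zero_right v
      | add x y _ _ hx hy => rw [inner_add_right, hx, hy]; ring
      | smul a x _ hx => rw [real_inner_smul_right, hx]; ring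
    exact inner_self_eq_zero.mp (hmem v (hspan ▸ Submodule.mem_top))
  obtain ⟨lamN, hlamN_def⟩ : ∃ f : ℕ → E, f = fun n => if h : 0 < n ∧ n ≤ r then lam ⟨n-1, by omega⟩ else 0 := ⟨_, rfl⟩
  have hlamN_pos : ∀ n (h1 : 0 < n) (h2 : n ≤ r), lamN n = lam ⟨n-1, by omega⟩ := by
    intro n h1 h2
    simp only [hlamN_def, dif_pos (And.intro h1 h2)]
  have hlamN_zero : ∀ n, ¬(0 < n ∧ n ≤ r) → lamN n = 0 := by
    intro n h; simp only [hlamN_def, dif_neg h]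
  have hlamN_eq : ∀ i : Fin r, lamN (i.val+1) = lam i := by
    intro i
    rw [hlamN_pos (i.val+1) (by omega) i.isLt]
    exact congrArg lam (Fin.ext (by simp))
  have hlamN_inner : ∀ n (j : Fin r), ⟪lamN n, α j⟫ = if n = j.val + 1 then 1 else 0 := by
    intro n j
    by_cases h : 0 < n ∧ n ≤ r
    · rw [hlamN_pos n h.1 h.2, hlα]
      have hiff : ((⟨n-1, by omega⟩ : Fin r) = j) ↔ n = j.val + 1 := by
        rw [Fin.ext_iff]; simp; omega
      by_cases hc : n = j.val + 1
      · rw [if_pos (hiff.mpr hc), if_pos hc]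
      · rw [if_neg (fun he => hc (hiff.mp he)), if_neg hc]
    · rw [hlamN_zero n h, inner_zero_left]
      have hj := j.isLt
      rw [if_neg (by omega)]
  have hα_lam : ∀ i : Fin r, α i = (2:ℝ) • lamN (i.val+1) - lamN i.val - lamN (i.val+2) := by
    intro i
    have h0 : ∀ j : Fin r, ⟪α i - ((2:ℝ) • lamN (i.val+1) - lamN i.val - lamN (i.val+2)), α j⟫ = 0 := by
      intro j
      rw [inner_sub_left, inner_sub_left, inner_sub_left, real_inner_smul_left, hαα,
        hlamN_inner, hlamN_inner, hlamN_inner]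
      have hi := i.isLt; have hj := j.isLt
      simp only [Fin.ext_iff]
      split_ifs <;> norm_num <;> omega
    exact sub_eq_zero.mp (hzero _ h0)
  have hU : ∀ (s : E) (i : Fin r), ⟪α i, s⟫
      = 2 * ⟪lamN (i.val+1), s⟫ - ⟪lamN i.val, s⟫ - ⟪lamN (i.val+2), s⟫ := by
    intro s i
    rw [hα_lam i, inner_sub_left, inner_sub_left, real_inner_smul_left]
  constructor
  · rintro ⟨s, hpos, hsort⟩ j hj
    obtain ⟨u, hu_def⟩ : ∃ f : ℕ → ℝ, f = fun n => ⟪lamN n, s⟫ := ⟨_, rfl⟩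
    have hconc : ∀ n, 1 ≤ n → n ≤ r → u (n-1) + u (n+1) < 2 * u n := by
      intro n h1 h2
      have h := hpos ⟨n-1, by omega⟩
      rw [hU] at h
      simp only [hu_def]
      have e1 : (⟨n-1, by omega⟩ : Fin r).val + 1 = n := by simp; omega
      have e2 : (⟨n-1, by omega⟩ : Fin r).val + 2 = n + 1 := by simp; omega
      have e3 : (⟨n-1, by omega⟩ : Fin r).val = n - 1 := rfl
      rw [e1, e2, e3] at h
      linarith
    have hsortu : ∀ a b : Fin r, a ≤ b → u ((σ b).val+1) ≤ u ((σ a).val+1) := by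
      intro a b hab
      have h := hsort a b hab
      rw [← hlamN_eq (σ a), ← hlamN_eq (σ b)] at h
      rw [hu_def]
      exact h
    have hk0j : (⟨0, hr⟩ : Fin r) < j := hj
    set m0 := (σ j).val with hm0
    set pv := (σ (⟨0, hr⟩ : Fin r)).val + 1 with hpv
    have hm0r : m0 < r := (σ j).isLt
    have hpvr : pv ≤ r := (σ (⟨0, hr⟩ : Fin r)).isLt
    have hpv1 : 1 ≤ pv := by omega
    have hne' : pv ≠ m0 + 1 := by
      intro he
      have h1 : σ (⟨0,hr⟩ : Fin r) = σ j := Fin.ext (by omega)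
      have h2 := σ.injective h1
      rw [← h2] at hj
      simp at hj
    have hum : u (m0+1) ≤ u pv := hsortu ⟨0,hr⟩ j (le_of_lt hk0j)
    by_cases hc1 : pv = m0 ∨ m0 + 2 = pv
    · refine ⟨⟨0,hr⟩, hk0j, ?_⟩
      rcases hc1 with h | h
      · exact Or.inl (by omega)
      · exact Or.inr (by omega)
    · push_neg at hc1
      rcases Nat.lt_or_ge pv (m0+1) with hlt | hge
      · -- pv < m0, i.e. pv + 1 ≤ m0, and pv ≠ m0 so pv < m0
        have hpm : pv < m0 := by omega
        have hkey : u (m0+1) < u m0 := by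
          by_contra hcon
          push_neg at hcon
          have Q : ∀ t n, pv ≤ n → n < m0 → m0 ≤ n + t + 1 → u n < u (n+1) := by
            intro t
            induction t with
            | zero =>
              intro n h1 h2 h3
              have hn : m0 = n + 1 := by omega
              have hc := hconc (n+1) (by omega) (by omega)
              have e : n + 1 - 1 = n := by omega
              rw [e] at hc
              have h4 : u (n+1) ≤ u (n+2) := by
                rw [show n + 1 = m0 from hn.symm, show n + 2 = m0 + 1 by omega]
                exact hcon
              linarith
            | succ t iht =>
              intro n h1 h2 h3
              rcases le_or_gt m0 (n+t+1) with h4 | h4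
              · exact iht n h1 h2 h4
              · have h5 : u (n+1) < u (n+2) := iht (n+1) (by omega) (by omega) (by omega)
                have hc := hconc (n+1) (by omega) (by omega)
                have e : n + 1 - 1 = n := by omega
                rw [e] at hc
                linarith
          have h6 : u pv < u m0 :=
            chain_lt u m0 pv hpm (fun n h1 h2 => Q m0 n h1 h2 (by omega))
          linarith
        have hm02 : 2 ≤ m0 := by omega
        refine ⟨σ.symm ⟨m0 - 1, by omega⟩, ?_, Or.inl ?_⟩
        · by_contra hcon
          push_neg at hcon
          have h7 := hsortu j (σ.symm ⟨m0 - 1, by omega⟩) hcon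
          rw [Equiv.apply_symm_apply] at h7
          simp only [show (⟨m0-1, by omega⟩ : Fin r).val = m0 - 1 from rfl] at h7
          rw [show m0 - 1 + 1 = m0 by omega] at h7
          exact absurd h7 (not_le.mpr hkey)
        · rw [Equiv.apply_symm_apply]
          simp only [show (⟨m0-1, by omega⟩ : Fin r).val = m0 - 1 from rfl]
          omega
      · -- m0 + 1 < pv, in fact m0 + 2 < pv
        have hpm : m0 + 2 < pv := by omega
        have hkey : u (m0+1) < u (m0+2) := by
          by_contra hcon
          push_neg at hcon
          have R : ∀ n, m0 + 2 ≤ n → n < pv → u (n+1) < u n := by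
            intro n hn
            induction n, hn using Nat.le_induction with
            | base =>
              intro h2
              have hc := hconc (m0+2) (by omega) (by omega)
              have e : m0 + 2 - 1 = m0 + 1 := by omega
              rw [e] at hc
              linarith
            | succ n hn ihn =>
              intro h2
              have h5 : u (n+1) < u n := ihn (by omega)
              have hc := hconc (n+1) (by omega) (by omega)
              have e : n + 1 - 1 = n := by omega
              rw [e] at hc
              linarith
          have h6 : (fun n => -u n) (m0+2) < (fun n => -u n) pv :=
            chain_lt (fun n => -u n) pv (m0+2) (by omega)
              (fun n h1 h2 => by simpa using R n h1 h2)
          simp only [neg_lt_neg_iff] at h6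
          linarith
        refine ⟨σ.symm ⟨m0 + 1, by omega⟩, ?_, Or.inr ?_⟩
        · by_contra hcon
          push_neg at hcon
          have h7 := hsortu j (σ.symm ⟨m0 + 1, by omega⟩) hcon
          rw [Equiv.apply_symm_apply] at h7
          simp only [show (⟨m0+1, by omega⟩ : Fin r).val = m0 + 1 from rfl] at h7
          exact absurd h7 (not_le.mpr hkey)
        · rw [Equiv.apply_symm_apply]
  · intro hadj
    obtain ⟨rk, hrk⟩ : ∃ f : Fin r → ℕ, f = fun i => (σ.symm i).val := ⟨_, rfl⟩
    have hrkinj : ∀ i i' : Fin r, rk i = rk i' → i = i' := by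
      intro i i' h
      rw [hrk] at h
      exact σ.symm.injective (Fin.ext h)
    have hrkσ : ∀ k : Fin r, rk (σ k) = k.val := by
      intro k; simp only [hrk, Equiv.symm_apply_apply]
    have hrklt : ∀ i, rk i < r := by
      intro i; rw [hrk]; exact (σ.symm i).isLt
    have hint : ∀ j, j ≤ r → ∃ lo : ℕ, ∀ x (hx : x < r), (rk ⟨x, hx⟩ < j ↔ lo ≤ x ∧ x < lo + j) := by
      intro j
      induction j with
      | zero =>
        intro _
        exact ⟨0, by intro x hx; constructor <;> omega⟩
      | succ j ih =>
        intro hj1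
        obtain ⟨lo, hlo⟩ := ih (by omega)
        have hjr : j < r := hj1
        set n := (σ ⟨j, hjr⟩).val with hn
        have hnr : n < r := (σ ⟨j,hjr⟩).isLt
        have hrkn : rk ⟨n, hnr⟩ = j := by
          have he : (⟨n, hnr⟩ : Fin r) = σ ⟨j,hjr⟩ := Fin.ext rfl
          rw [he, hrkσ]
        have hmem : ∀ x (hx : x < r), rk ⟨x,hx⟩ < j + 1 ↔ (rk ⟨x,hx⟩ < j ∨ x = n) := by
          intro x hx
          constructor
          · intro h
            rcases Nat.lt_or_ge (rk ⟨x,hx⟩) j with h' | h'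
            · exact Or.inl h'
            · have he : rk ⟨x,hx⟩ = j := by omega
              have he2 : (⟨x,hx⟩ : Fin r) = ⟨n,hnr⟩ := hrkinj _ _ (by rw [he, hrkn])
              exact Or.inr (congrArg Fin.val he2)
          · rintro (h | h)
            · omega
            · have he : (⟨x,hx⟩ : Fin r) = ⟨n,hnr⟩ := Fin.ext h
              rw [he, hrkn]; omega
        by_cases hj0 : j = 0
        · subst hj0
          refine ⟨n, fun x hx => ?_⟩
          rw [hmem x hx]
          constructor
          · rintro (h | h)
            · omega
            · omega
          · intro h; right; omega
        · obtain ⟨k, hk, hadj'⟩ := hadj ⟨j, hjr⟩ (Nat.pos_of_ne_zero hj0)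
          set e := (σ k).val with he
          have her : e < r := (σ k).isLt
          have hePj : rk ⟨e, her⟩ < j := by
            have he2 : (⟨e,her⟩ : Fin r) = σ k := Fin.ext rfl
            rw [he2, hrkσ]
            exact hk
          have helo := (hlo e her).mp hePj
          have hnPj : ¬ (rk ⟨n,hnr⟩ < j) := by rw [hrkn]; omega
          have hnlo : ¬ (lo ≤ n ∧ n < lo + j) := fun h => hnPj ((hlo n hnr).mpr h)
          rcases hadj' with h1 | h1
          · have hnv : n = lo + j := by omega
            exact ⟨lo, fun x hx => by rw [hmem x hx, hlo x hx]; omega⟩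
          · have hnv : n + 1 = lo := by omega
            exact ⟨n, fun x hx => by rw [hmem x hx, hlo x hx]; omega⟩
    have hstruct : ∀ i : Fin r, ∀ (h0 : 0 < i.val) (h1 : i.val + 1 < r),
        ¬ (rk ⟨i.val-1, by omega⟩ < rk i ∧ rk ⟨i.val+1, by omega⟩ < rk i) := by
      rintro i h0 h1 ⟨ha, hb⟩
      obtain ⟨lo, hlo⟩ := hint (rk i) (le_of_lt (hrklt i))
      have h2 := (hlo (i.val-1) (by omega)).mp ha
      have h3 := (hlo (i.val+1) (by omega)).mp hb
      have h4 : rk ⟨i.val, i.isLt⟩ < rk i := (hlo i.val i.isLt).mpr ⟨by omega, by omega⟩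
      have he : (⟨i.val, i.isLt⟩ : Fin r) = i := Fin.ext rfl
      rw [he] at h4
      omega
    obtain ⟨c, hc⟩ : ∃ f : ℕ → ℝ, f = fun n => (4:ℝ)^r - 4^n := ⟨_, rfl⟩
    have hcmono : ∀ a b : ℕ, a ≤ b → c b ≤ c a := by
      intro a b h
      simp only [hc]
      have h2 : (4:ℝ)^a ≤ 4^b := pow_le_pow_right₀ (by norm_num) h
      linarith
    have hcpos : ∀ n, n < r → 0 < c n := by
      intro n h
      simp only [hc]
      have h2 : (4:ℝ)^n < 4^r := pow_lt_pow_right₀ (by norm_num) h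
      linarith
    obtain ⟨s, hs⟩ : ∃ v : E, v = ∑ i : Fin r, c (rk i) • α i := ⟨_, rfl⟩
    have hlam_s : ∀ i : Fin r, ⟪lam i, s⟫ = c (rk i) := by
      intro i
      rw [hs, inner_sum]
      rw [Finset.sum_eq_single i]
      · rw [real_inner_smul_right, hlα, if_pos rfl, mul_one]
      · intro b _ hb
        rw [real_inner_smul_right, hlα, if_neg (fun h => hb h.symm), mul_zero]
      · intro h; exact absurd (Finset.mem_univ i) h
    have hlamN_s : ∀ n (h1 : 0 < n) (h2 : n ≤ r), ⟪lamN n, s⟫ = c (rk ⟨n-1, by omega⟩) := by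
      intro n h1 h2
      rw [hlamN_pos n h1 h2]
      exact hlam_s _
    have hlamN_s0 : ∀ n, ¬(0 < n ∧ n ≤ r) → ⟪lamN n, s⟫ = 0 := by
      intro n h
      rw [hlamN_zero n h, inner_zero_left]
    refine ⟨s, ?_, ?_⟩
    have hlamN_s' : ∀ (n : ℕ) (h : n < r), ⟪lamN (n+1), s⟫ = c (rk ⟨n, h⟩) := by
      intro n h
      rw [hlamN_pos (n+1) (by omega) (by omega)]
      exact hlam_s ⟨n, h⟩
    · intro i
      rw [hU s i]
      have hXe : (⟨i.val, i.isLt⟩ : Fin r) = i := Fin.ext rfl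
      have hX : ⟪lamN (i.val+1), s⟫ = c (rk i) := by
        rw [hlamN_s' i.val i.isLt, hXe]
      have hrki := hrklt i
      have h4pos : ∀ n : ℕ, (0:ℝ) < 4 ^ n := fun n => by positivity
      by_cases h0 : 0 < i.val
      · by_cases h1 : i.val + 1 < r
        · -- interior
          have hm1r : i.val - 1 < r := by omega
          have hY : ⟪lamN i.val, s⟫ = c (rk ⟨i.val-1, hm1r⟩) := by
            have h2 := hlamN_s' (i.val-1) hm1r
            rw [show i.val - 1 + 1 = i.val by omega] at h2
            exact h2
          have hZ : ⟪lamN (i.val+2), s⟫ = c (rk ⟨i.val+1, h1⟩) :=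
            hlamN_s' (i.val+1) h1
          rw [hX, hY, hZ]
          have hb1 : rk ⟨i.val-1, hm1r⟩ ≠ rk i := by
            intro h
            have h2 := congrArg Fin.val (hrkinj _ _ h)
            simp at h2
            omega
          have hb2 : rk ⟨i.val+1, h1⟩ ≠ rk i := by
            intro h
            have h2 := congrArg Fin.val (hrkinj _ _ h)
            simp at h2
          have hns := hstruct i h0 h1
          have hcase : rk i < rk ⟨i.val-1, hm1r⟩ ∨ rk i < rk ⟨i.val+1, h1⟩ := by
            omega
          simp only [hc]
          have p1 := h4pos (rk ⟨i.val-1, hm1r⟩)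
          have p2 := h4pos (rk ⟨i.val+1, h1⟩)
          have e4 : (4:ℝ)^(rk i + 1) = 4 * 4^(rk i) := by rw [pow_succ]; ring
          rcases hcase with h | h
          · have h5 : (4:ℝ)^(rk i + 1) ≤ 4 ^ rk ⟨i.val-1, hm1r⟩ :=
              pow_le_pow_right₀ (by norm_num) h
            linarith
          · have h5 : (4:ℝ)^(rk i + 1) ≤ 4 ^ rk ⟨i.val+1, h1⟩ :=
              pow_le_pow_right₀ (by norm_num) h
            linarith
        · -- right boundary: i.val + 1 = r
          have hm1r : i.val - 1 < r := by omega
          have hZ : ⟪lamN (i.val+2), s⟫ = 0 := hlamN_s0 _ (by omega)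
          have hY : ⟪lamN i.val, s⟫ = c (rk ⟨i.val-1, hm1r⟩) := by
            have h2 := hlamN_s' (i.val-1) hm1r
            rw [show i.val - 1 + 1 = i.val by omega] at h2
            exact h2
          rw [hX, hY, hZ]
          simp only [hc]
          have p1 := h4pos (rk ⟨i.val-1, hm1r⟩)
          have h5 : (4:ℝ)^(rk i) ≤ 4^(r-1) := pow_le_pow_right₀ (by norm_num) (by omega)
          have e4 : (4:ℝ)^r = 4 * 4^(r-1) := by
            conv_lhs => rw [show r = (r-1) + 1 by omega]
            rw [pow_succ]; ring
          have p0 := h4pos (r-1)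
          linarith
      · push_neg at h0
        have hY : ⟪lamN i.val, s⟫ = 0 := hlamN_s0 _ (by omega)
        by_cases h1 : i.val + 1 < r
        · have hZ : ⟪lamN (i.val+2), s⟫ = c (rk ⟨i.val+1, h1⟩) :=
            hlamN_s' (i.val+1) h1
          rw [hX, hY, hZ]
          simp only [hc]
          have p2 := h4pos (rk ⟨i.val+1, h1⟩)
          have h5 : (4:ℝ)^(rk i) ≤ 4^(r-1) := pow_le_pow_right₀ (by norm_num) (by omega)
          have e4 : (4:ℝ)^r = 4 * 4^(r-1) := by
            conv_lhs => rw [show r = (r-1) + 1 by omega]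
            rw [pow_succ]; ring
          have p0 := h4pos (r-1)
          linarith
        · -- r = 1
          have hZ : ⟪lamN (i.val+2), s⟫ = 0 := hlamN_s0 _ (by omega)
          rw [hX, hY, hZ]
          have := hcpos (rk i) (hrklt i)
          linarith
    · intro a b hab
      rw [hlam_s, hlam_s, hrkσ, hrkσ]
      exact hcmono a.val b.val hab
end
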